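/- (Periodic excitation sustains riots.) Consider the single-site system with periodic shocks: between shock times the dynamics are λ' = -ωλ + r(α)G(λ), α' = -h(λ)α, and at times t_i = iT (i = 0,1,2,...) the tension jumps: α(t_i⁺) = α(t_i⁻) + A. Assume λ(0) = λ₀ > 0, z₀ r(0) < ω < z₀, G(z)=z(z₀-z), r increasing with limit 1 at +∞, h ≤ θ. Then for every T > 0 and δ > 0 there exists A* = A*(T, δ, λ₀) such that for all A ≥ A*, liminf_{t→∞} λ(t) ≥ λ* - δ, where λ* = z₀ - ω. -/

import Mathlib

/-!
After each shock the tension obeys `α' = -h(λ) α ≥ -θ α`, so on a whole period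
`α ≥ A e^{-θT}`; for `A` large this keeps `r(α) ≥ 1 - η` for all `t ≥ 0`, while `λ` stays in
`(0, max λ₀ z₀]`. Below `c = z₀ - ω - δ'` (with `0 < δ' ≤ δ`) the comparison
`λ' ≥ -ωλ + (1 - η) λ (z₀ - λ)` then gives `λ' ≥ (δ'/2) λ`: so `λ` grows exponentially until it
passes `c`, and afterwards cannot fall back below `c`, since its derivative is positive there.
-/

open Real Filter Set

noncomputable def rfun (β a z : ℝ) : ℝ := 1 / (1 + Real.exp (-β * (z - a)))

noncomputable def hfun (θ p z : ℝ) : ℝ := θ / (1 + z) ^ p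

noncomputable def Gfun (z₀ z : ℝ) : ℝ := z * (z₀ - z)

open Topology

theorem le_of_hasDerivAt_nonneg_of_lt {f f' : ℝ → ℝ} {a b m : ℝ}
    (hc : ContinuousOn f (Icc a b)) (hd : ∀ x ∈ Ioo a b, HasDerivAt f (f' x) x)
    (hf' : ∀ x ∈ Ioo a b, f x < m → 0 ≤ f' x) (ha : m ≤ f a) :
    ∀ t ∈ Icc a b, m ≤ f t := by
  intro t ht
  by_contra! hft
  have hct : ContinuousOn f (Icc a t) := hc.mono (Icc_subset_Icc_right ht.2)
  set S := Icc a t ∩ f ⁻¹' Ici m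
  have hbdd : BddAbove S := bddAbove_Icc.mono inter_subset_left
  have hu : sSup S ∈ S := (hct.preimage_isClosed_of_isClosed isClosed_Icc isClosed_Ici).csSup_mem
    ⟨a, left_mem_Icc.2 ht.1, ha⟩ hbdd
  set u := sSup S
  have hut : u < t := hu.1.2.lt_of_ne fun h => hft.not_ge (h ▸ hu.2)
  have hlt : ∀ x ∈ Ioo u t, f x < m := fun x hx => by
    by_contra! h
    exact hx.1.not_ge (le_csSup hbdd ⟨⟨hu.1.1.trans hx.1.le, hx.2.le⟩, h⟩)
  have hsub : Ioo u t ⊆ Ioo a b := Ioo_subset_Ioo hu.1.1 ht.2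
  have hmono : MonotoneOn f (Icc u t) := by
    refine monotoneOn_of_hasDerivWithinAt_nonneg (f' := f') (convex_Icc u t)
      (hct.mono (Icc_subset_Icc_left hu.1.1)) (fun x hx => ?_) fun x hx => ?_
    · rw [interior_Icc] at hx ⊢
      exact (hd x (hsub hx)).hasDerivWithinAt
    · rw [interior_Icc] at hx
      exact hf' x (hsub hx) (hlt x hx)
  exact hft.not_ge (hu.2.trans (hmono (left_mem_Icc.2 hut.le) (right_mem_Icc.2 hut.le) hut.le))

theorem le_of_hasDerivAt_nonneg_of_mem_Ioo {f f' : ℝ → ℝ} {a b l m : ℝ} (hlm : l < m)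
    (hc : ContinuousOn f (Icc a b)) (hd : ∀ x ∈ Ioo a b, HasDerivAt f (f' x) x)
    (hf' : ∀ x ∈ Ioo a b, f x ∈ Ioo l m → 0 ≤ f' x) (ha : m ≤ f a) :
    ∀ t ∈ Icc a b, m ≤ f t := by
  intro t ht
  by_contra! hft
  set k := max l (f t)
  have hkm : k < m := max_lt hlm hft
  have hct : ContinuousOn f (Icc a t) := hc.mono (Icc_subset_Icc_right ht.2)
  set S := Icc a t ∩ f ⁻¹' Iic k
  have hbdd : BddBelow S := bddBelow_Icc.mono inter_subset_left
  have hv : sInf S ∈ S := (hct.preimage_isClosed_of_isClosed isClosed_Icc isClosed_Iic).csInf_mem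
    ⟨t, right_mem_Icc.2 ht.1, le_max_right l (f t)⟩ hbdd
  set v := sInf S
  have hgt : ∀ x ∈ Ico a v, k < f x := fun x hx => by
    by_contra! h
    exact hx.2.not_ge (csInf_le hbdd ⟨⟨hx.1, hx.2.le.trans hv.1.2⟩, h⟩)
  have hvb : v ≤ b := hv.1.2.trans ht.2
  have hmv : m ≤ f v := le_of_hasDerivAt_nonneg_of_lt (hc.mono (Icc_subset_Icc_right hvb))
    (fun x hx => hd x (Ioo_subset_Ioo_right hvb hx))
    (fun x hx hxm => hf' x (Ioo_subset_Ioo_right hvb hx)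
      ⟨(le_max_left _ _).trans_lt (hgt x ⟨hx.1.le, hx.2⟩), hxm⟩) ha v (right_mem_Icc.2 hv.1.1)
  exact hkm.not_ge (hmv.trans hv.2)

theorem mul_exp_le_of_hasDerivAt {f f' : ℝ → ℝ} {a b K : ℝ}
    (hc : ContinuousOn f (Icc a b)) (hd : ∀ x ∈ Ioo a b, HasDerivAt f (f' x) x)
    (hf' : ∀ x ∈ Ioo a b, 0 < f x → K * f x ≤ f' x) (ha : 0 < f a) :
    ∀ t ∈ Icc a b, f a * exp (K * (t - a)) ≤ f t := by
  intro t ht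
  have hg : ∀ x, HasDerivAt (fun x => exp (-K * x)) (exp (-K * x) * -K) x := fun x => by
    simpa using ((hasDerivAt_id x).const_mul (-K)).exp
  have key := le_of_hasDerivAt_nonneg_of_mem_Ioo (f := fun x => f x * exp (-K * x))
    (f' := fun x => f' x * exp (-K * x) + f x * (exp (-K * x) * -K)) (mul_pos ha (exp_pos _))
    (hc.mul (continuous_exp.comp (continuous_const_mul _)).continuousOn)
    (fun x hx => (hd x hx).mul (hg x))
    (fun x hx hfx => by
      have := hf' x hx (pos_of_mul_pos_left hfx.1 (exp_pos _).le)
      nlinarith [exp_pos (-K * x)]) le_rfl t ht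
  calc f a * exp (K * (t - a)) = f a * exp (-K * a) * exp (K * t) := by
        rw [mul_assoc, ← exp_add]; ring_nf
    _ ≤ f t * exp (-K * t) * exp (K * t) := by gcongr
    _ = f t := by rw [mul_assoc, ← exp_add]; simp

theorem mem_Ico_floor_div_mul {T t : ℝ} (hT : 0 < T) (ht : 0 ≤ t) :
    t ∈ Ico ((⌊t / T⌋₊ : ℝ) * T) ((⌊t / T⌋₊ + 1) * T) :=
  ⟨(le_div_iff₀ hT).1 (Nat.floor_le (div_nonneg ht hT.le)),
    (div_lt_iff₀ hT).1 (Nat.lt_floor_add_one _)⟩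

theorem eventually_ge_of_growth_below {f f' : ℝ → ℝ} {T c κ : ℝ} (hT : 0 < T) (hκ : 0 < κ)
    (hc : ContinuousOn f (Ici 0))
    (hd : ∀ i : ℕ, ∀ t ∈ Ioo ((i : ℝ) * T) ((i + 1) * T), HasDerivAt f (f' t) t)
    (hpos : ∀ t, 0 ≤ t → 0 < f t)
    (hgrow : ∀ i : ℕ, ∀ t ∈ Ioo ((i : ℝ) * T) ((i + 1) * T), f t ≤ c → κ * f t ≤ f' t) :
    ∀ᶠ t in atTop, c ≤ f t := by
  have hcIcc : ∀ i : ℕ, ContinuousOn f (Icc ((i : ℝ) * T) ((i + 1) * T)) := fun i =>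
    hc.mono fun _ hx => (mul_nonneg i.cast_nonneg hT.le).trans hx.1
  have hnext : ∀ i : ℕ, ((i + 1 : ℕ) : ℝ) * T = (i + 1) * T := fun i => by push_cast; rfl
  have hstep : ∀ i : ℕ, (i : ℝ) * T ≤ (i + 1) * T := fun i => by nlinarith
  have hbarrier : ∀ i : ℕ, ∀ s ∈ Icc ((i : ℝ) * T) ((i + 1) * T), c ≤ f s →
      ∀ t ∈ Icc s ((i + 1) * T), c ≤ f t := fun i s hs hcs =>
    le_of_hasDerivAt_nonneg_of_mem_Ioo (sub_one_lt c) ((hcIcc i).mono (Icc_subset_Icc_left hs.1))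
      (fun x hx => hd i x (Ioo_subset_Ioo_left hs.1 hx))
      (fun x hx hfx =>
        have hx₀ : 0 ≤ x := (mul_nonneg i.cast_nonneg hT.le).trans (hs.1.trans hx.1.le)
        (mul_pos hκ (hpos x hx₀)).le.trans (hgrow i x (Ioo_subset_Ioo_left hs.1 hx) hfx.2.le)) hcs
  obtain ⟨i₀, hi₀⟩ : ∃ i : ℕ, c ≤ f (i * T) := by
    by_contra! hlt
    have hbelow : ∀ i : ℕ, ∀ t ∈ Icc ((i : ℝ) * T) ((i + 1) * T), f t < c := fun i t ht =>
      lt_of_not_ge fun h => (hlt (i + 1)).not_ge <| hnext i ▸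
        hbarrier i t ht h _ (right_mem_Icc.2 ht.2)
    have hexp : ∀ n : ℕ, f 0 * exp (κ * (n * T)) ≤ f (n * T) := by
      intro n
      induction n with
      | zero => simp
      | succ n ih =>
        have := mul_exp_le_of_hasDerivAt (hcIcc n) (hd n)
          (fun x hx _ => hgrow n x hx (hbelow n x (Ioo_subset_Icc_self hx)).le)
          (hpos _ (mul_nonneg n.cast_nonneg hT.le)) _ (right_mem_Icc.2 (hstep n))
        rw [hnext]
        calc f 0 * exp (κ * ((n + 1) * T))
            = f 0 * exp (κ * (n * T)) * exp (κ * ((n + 1) * T - n * T)) := by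
              rw [mul_assoc, ← exp_add]; ring_nf
          _ ≤ f (n * T) * exp (κ * ((n + 1) * T - n * T)) := by gcongr
          _ ≤ _ := this
    have htend : Tendsto (fun n : ℕ => f 0 * exp (κ * (n * T))) atTop atTop :=
      (tendsto_exp_atTop.comp ((tendsto_natCast_atTop_atTop.atTop_mul_const hT).const_mul_atTop
        hκ)).const_mul_atTop (hpos 0 le_rfl)
    obtain ⟨n, hn⟩ := ((tendsto_atTop_mono hexp htend).eventually_ge_atTop c).exists
    exact (hlt n).not_ge hn
  have hgrid : ∀ i, i₀ ≤ i → c ≤ f (i * T) := by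
    intro i hi
    induction i, hi using Nat.le_induction with
    | base => exact hi₀
    | succ i _ ih =>
      exact hnext i ▸ hbarrier i _ (left_mem_Icc.2 (hstep i)) ih _ (right_mem_Icc.2 (hstep i))
  filter_upwards [eventually_ge_atTop ((i₀ : ℝ) * T), eventually_ge_atTop 0] with t ht ht₀
  have hmem := mem_Ico_floor_div_mul hT ht₀
  have hi : i₀ ≤ ⌊t / T⌋₊ := Nat.le_floor ((le_div_iff₀ hT).2 ht)
  exact hbarrier _ _ (left_mem_Icc.2 (hstep _)) (hgrid _ hi) t ⟨hmem.1, hmem.2.le⟩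

theorem rfun_pos (β a z : ℝ) : 0 < rfun β a z := by
  unfold rfun; positivity

theorem rfun_le_one (β a z : ℝ) : rfun β a z ≤ 1 := by
  unfold rfun
  rw [div_le_one (by positivity)]
  linarith [exp_pos (-β * (z - a))]

theorem tendsto_rfun_atTop {β : ℝ} (a : ℝ) (hβ : 0 < β) : Tendsto (rfun β a) atTop (𝓝 1) := by
  have h : Tendsto (fun z => -β * (z - a)) atTop atBot :=
    (tendsto_atTop_add_const_right _ (-a) tendsto_id).const_mul_atTop_of_neg (neg_lt_zero.2 hβ)
  convert ((tendsto_exp_atBot.comp h).const_add 1).inv₀ (by norm_num) using 2 <;>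
    simp [rfun]

theorem hfun_le {θ p z : ℝ} (hθ : 0 ≤ θ) (hp : 0 ≤ p) (hz : 0 ≤ z) : hfun θ p z ≤ θ :=
  div_le_self hθ (one_le_rpow (by linarith) hp)

theorem half_mul_le_neg_mul_add_mul_Gfun {ω z₀ δ r z : ℝ} (hωδ : 0 < ω + δ) (hr₀ : 0 ≤ r)
    (hr : 1 - δ / (2 * (ω + δ)) ≤ r) (hz : 0 ≤ z) (hzc : z ≤ z₀ - ω - δ) :
    δ / 2 * z ≤ -ω * z + r * Gfun z₀ z := by
  have hη : (1 - δ / (2 * (ω + δ))) * (ω + δ) = ω + δ / 2 := by field_simp; ring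
  have : ω + δ / 2 ≤ r * (z₀ - z) := hη ▸ mul_le_mul hr (by linarith) hωδ.le hr₀
  unfold Gfun; nlinarith

structure IsShockSolution (ω z₀ β a θ p T A : ℝ) (lam alp : ℝ → ℝ) : Prop where
  continuousOn_lam : ContinuousOn lam (Ici 0)
  hasDerivAt_lam : ∀ i : ℕ, ∀ t ∈ Ioo ((i : ℝ) * T) ((i + 1) * T),
    HasDerivAt lam (-ω * lam t + rfun β a (alp t) * Gfun z₀ (lam t)) t
  hasDerivAt_alp : ∀ i : ℕ, ∀ t ∈ Ioo ((i : ℝ) * T) ((i + 1) * T),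
    HasDerivAt alp (-(hfun θ p (lam t)) * alp t) t
  continuousWithinAt_alp : ∀ i : ℕ, ContinuousWithinAt alp (Ici ((i : ℝ) * T)) (i * T)
  tendsto_alp : ∀ i : ℕ, 1 ≤ i → Tendsto alp (𝓝[<] ((i : ℝ) * T)) (𝓝 (alp (i * T) - A))

namespace IsShockSolution

variable {ω z₀ β a θ p T A : ℝ} {lam alp : ℝ → ℝ}

theorem continuousOn_lam_Icc (hs : IsShockSolution ω z₀ β a θ p T A lam alp) (hT : 0 ≤ T)
    (i : ℕ) : ContinuousOn lam (Icc ((i : ℝ) * T) ((i + 1) * T)) :=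
  hs.continuousOn_lam.mono fun _ hx => (mul_nonneg i.cast_nonneg hT).trans hx.1

theorem lam_le (hs : IsShockSolution ω z₀ β a θ p T A lam alp) (hT : 0 ≤ T) (hω : 0 ≤ ω)
    {M : ℝ} (hM₀ : 0 ≤ M) (hM : z₀ ≤ M) (i : ℕ) (hi : lam (i * T) ≤ M) :
    ∀ t ∈ Icc ((i : ℝ) * T) ((i + 1) * T), lam t ≤ M := by
  intro t ht
  refine neg_le_neg_iff.1 <| le_of_hasDerivAt_nonneg_of_lt (f := fun t => -lam t)
    (hs.continuousOn_lam_Icc hT i).neg (fun x hx => (hs.hasDerivAt_lam i x hx).neg)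
    (fun x _ hx => ?_) (neg_le_neg hi) t ht
  have hx : M < lam x := neg_lt_neg_iff.1 hx
  have : 0 ≤ rfun β a (alp x) * (lam x * (lam x - z₀)) :=
    mul_nonneg (rfun_pos _ _ _).le (mul_nonneg (by linarith) (by linarith))
  unfold Gfun
  nlinarith

theorem lam_pos (hs : IsShockSolution ω z₀ β a θ p T A lam alp) (hT : 0 ≤ T) (hz₀ : 0 ≤ z₀)
    {M : ℝ} (i : ℕ) (hM : ∀ t ∈ Icc ((i : ℝ) * T) ((i + 1) * T), lam t ≤ M)
    (hi : 0 < lam (i * T)) : ∀ t ∈ Icc ((i : ℝ) * T) ((i + 1) * T), 0 < lam t := by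
  intro t ht
  refine (mul_pos hi (exp_pos _)).trans_le <| mul_exp_le_of_hasDerivAt (K := -(ω + M))
    (hs.continuousOn_lam_Icc hT i) (hs.hasDerivAt_lam i) (fun x hx hx₀ => ?_) hi t ht
  have hxM := hM x (Ioo_subset_Icc_self hx)
  have hr := rfun_le_one β a (alp x)
  have h : -M ≤ rfun β a (alp x) * (z₀ - lam x) := by
    nlinarith [rfun_pos β a (alp x)]
  unfold Gfun
  nlinarith [mul_le_mul_of_nonneg_left h hx₀.le]

theorem le_alp (hs : IsShockSolution ω z₀ β a θ p T A lam alp) (hθ : 0 ≤ θ) (hp : 0 ≤ p)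
    (i : ℕ) (hlam : ∀ t ∈ Ioo ((i : ℝ) * T) ((i + 1) * T), 0 ≤ lam t) (hi : 0 < alp (i * T)) :
    ∀ t ∈ Ico ((i : ℝ) * T) ((i + 1) * T), alp (i * T) * exp (-(θ * T)) ≤ alp t := by
  intro t ht
  have hsub : Ioo ((i : ℝ) * T) t ⊆ Ioo ((i : ℝ) * T) ((i + 1) * T) :=
    Ioo_subset_Ioo_right ht.2.le
  have hc : ContinuousOn alp (Icc ((i : ℝ) * T) t) := by
    intro x hx
    rcases hx.1.eq_or_lt with rfl | hx₁
    · exact (hs.continuousWithinAt_alp i).mono Icc_subset_Ici_self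
    · exact (hs.hasDerivAt_alp i x ⟨hx₁, hx.2.trans_lt ht.2⟩).continuousAt.continuousWithinAt
  calc alp (i * T) * exp (-(θ * T)) ≤ alp (i * T) * exp (-θ * (t - i * T)) := by
        gcongr
        nlinarith [ht.2]
    _ ≤ alp t := mul_exp_le_of_hasDerivAt hc (fun x hx => hs.hasDerivAt_alp i x (hsub hx))
        (fun x hx hx₀ => by nlinarith [hfun_le hθ hp (hlam x (hsub hx))]) hi t ⟨ht.1, le_rfl⟩

theorem le_alp_succ (hs : IsShockSolution ω z₀ β a θ p T A lam alp) (hT : 0 < T) (i : ℕ)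
    (hi : ∀ t ∈ Ioo ((i : ℝ) * T) ((i + 1) * T), 0 ≤ alp t) : A ≤ alp ((i + 1) * T) := by
  have h := hs.tendsto_alp (i + 1) (Nat.le_add_left 1 i)
  push_cast at h
  have := ge_of_tendsto h (eventually_of_mem (Ioo_mem_nhdsLT (by nlinarith)) hi)
  linarith

theorem period_bounds (hs : IsShockSolution ω z₀ β a θ p T A lam alp) (hT : 0 ≤ T)
    (hω : 0 ≤ ω) (hz₀ : 0 ≤ z₀) (hθ : 0 ≤ θ) (hp : 0 ≤ p) {M : ℝ} (hM : z₀ ≤ M) (i : ℕ)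
    (hlam : 0 < lam (i * T)) (hlamM : lam (i * T) ≤ M) (halp : 0 < alp (i * T)) :
    (∀ t ∈ Icc ((i : ℝ) * T) ((i + 1) * T), 0 < lam t ∧ lam t ≤ M) ∧
      ∀ t ∈ Ico ((i : ℝ) * T) ((i + 1) * T), alp (i * T) * exp (-(θ * T)) ≤ alp t := by
  have hle := hs.lam_le hT hω (hlam.le.trans hlamM) hM i hlamM
  have hpos := hs.lam_pos hT hz₀ i hle hlam
  exact ⟨fun t ht => ⟨hpos t ht, hle t ht⟩,
    hs.le_alp hθ hp i (fun t ht => (hpos t (Ioo_subset_Icc_self ht)).le) halp⟩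

theorem grid_bounds (hs : IsShockSolution ω z₀ β a θ p T A lam alp) (hT : 0 < T)
    (hω : 0 ≤ ω) (hz₀ : 0 ≤ z₀) (hθ : 0 ≤ θ) (hp : 0 ≤ p) (hA : 0 < A)
    (hlam : 0 < lam 0) (halp : A ≤ alp 0) (i : ℕ) :
    0 < lam (i * T) ∧ lam (i * T) ≤ max (lam 0) z₀ ∧ A ≤ alp (i * T) := by
  induction i with
  | zero => simpa using ⟨hlam, halp⟩
  | succ i ih =>
    obtain ⟨hlam, hlamM, halp⟩ := ih
    have halp₀ := hA.trans_le halp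
    obtain ⟨hlam', halp'⟩ :=
      hs.period_bounds hT.le hω hz₀ hθ hp (le_max_right _ _) i hlam hlamM halp₀
    have hend := hlam' _ (right_mem_Icc.2 (by nlinarith))
    push_cast
    exact ⟨hend.1, hend.2, hs.le_alp_succ hT i fun t ht =>
        (mul_pos halp₀ (exp_pos _)).le.trans (halp' t (Ioo_subset_Ico_self ht))⟩

theorem bounds_of_nonneg (hs : IsShockSolution ω z₀ β a θ p T A lam alp) (hT : 0 < T)
    (hω : 0 ≤ ω) (hz₀ : 0 ≤ z₀) (hθ : 0 ≤ θ) (hp : 0 ≤ p) (hA : 0 < A)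
    (hlam : 0 < lam 0) (halp : A ≤ alp 0) {t : ℝ} (ht : 0 ≤ t) :
    0 < lam t ∧ lam t ≤ max (lam 0) z₀ ∧ A * exp (-(θ * T)) ≤ alp t := by
  obtain ⟨hlamᵢ, hlamMᵢ, halpᵢ⟩ := hs.grid_bounds hT hω hz₀ hθ hp hA hlam halp ⌊t / T⌋₊
  have hmem := mem_Ico_floor_div_mul hT ht
  obtain ⟨hlam', halp'⟩ := hs.period_bounds hT.le hω hz₀ hθ hp (le_max_right _ _) _ hlamᵢ
    hlamMᵢ (hA.trans_le halpᵢ)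
  exact ⟨(hlam' t (Ico_subset_Icc_self hmem)).1, (hlam' t (Ico_subset_Icc_self hmem)).2,
    (mul_le_mul_of_nonneg_right halpᵢ (exp_pos _).le).trans (halp' t hmem)⟩

end IsShockSolution

theorem riot_periodic_excitation_general
    (ω z₀ β a θ p lam₀ : ℝ)
    (hω : 0 < ω) (hz₀ : 0 < z₀) (hβ : 0 < β)
    (hθ : 0 < θ) (hp : 0 < p)
    (hhigh : ω < z₀)
    (hlam₀ : 0 < lam₀) :
    ∀ T > (0:ℝ), ∀ δ > (0:ℝ), ∃ Astar > (0:ℝ), ∀ A ≥ Astar,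
      ∀ lam alp : ℝ → ℝ,
        lam 0 = lam₀ → alp 0 = A →
        ContinuousOn lam (Set.Ici 0) →
        -- between the shock times the riot dynamics hold
        (∀ i : ℕ, ∀ t ∈ Set.Ioo ((i : ℝ) * T) (((i : ℝ) + 1) * T),
          HasDerivAt lam (-ω * lam t + rfun β a (alp t) * Gfun z₀ (lam t)) t ∧
          HasDerivAt alp (-(hfun θ p (lam t)) * alp t) t) →
        -- at each shock time the tension is right-continuous and jumps up by `A`
        (∀ i : ℕ, ContinuousWithinAt alp (Set.Ici ((i : ℝ) * T)) ((i : ℝ) * T)) →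
        (∀ i : ℕ, 1 ≤ i →
          Tendsto alp (nhdsWithin ((i : ℝ) * T) (Set.Iio ((i : ℝ) * T)))
            (nhds (alp ((i : ℝ) * T) - A))) →
        (z₀ - ω) - δ ≤ Filter.liminf lam Filter.atTop := by
  intro T hT δ hδ
  set δ' := min δ ((z₀ - ω) / 2)
  have hδ' : 0 < δ' := lt_min hδ (by linarith)
  obtain ⟨x₀, hx₀⟩ := eventually_atTop.1 <| (tendsto_rfun_atTop a hβ).eventually <|
    eventually_ge_nhds (a := (1 : ℝ)) (b := 1 - δ' / (2 * (ω + δ'))) (by simp; positivity)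
  refine ⟨max 1 (x₀ * exp (θ * T)), by positivity, fun A hA lam alp hlam0 halp0 hlamc hode hrc
    hjump => ?_⟩
  have hA₀ : 0 < A := (zero_lt_one.trans_le (le_max_left _ _)).trans_le hA
  have hs : IsShockSolution ω z₀ β a θ p T A lam alp :=
    ⟨hlamc, fun i t ht => (hode i t ht).1, fun i t ht => (hode i t ht).2, hrc, hjump⟩
  have hx₀A : x₀ ≤ A * exp (-(θ * T)) := by
    rw [exp_neg, ← div_eq_mul_inv, le_div_iff₀ (exp_pos _)]
    exact (le_max_right _ _).trans hA
  have hbounds := fun t (ht : 0 ≤ t) => hs.bounds_of_nonneg hT hω.le hz₀.le hθ.le hp.le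
    hA₀ (hlam0 ▸ hlam₀) halp0.ge ht
  have hev : ∀ᶠ t in atTop, z₀ - ω - δ' ≤ lam t :=
    eventually_ge_of_growth_below hT (half_pos hδ') hlamc hs.hasDerivAt_lam
      (fun t ht => (hbounds t ht).1) fun i t ht hle =>
        have ht₀ : 0 ≤ t := (mul_nonneg i.cast_nonneg hT.le).trans ht.1.le
        half_mul_le_neg_mul_add_mul_Gfun (by positivity) (rfun_pos _ _ _).le
          (hx₀ _ (hx₀A.trans (hbounds t ht₀).2.2)) (hbounds t ht₀).1.le hle
  have hbdd : IsBoundedUnder (· ≤ ·) atTop lam := isBoundedUnder_of_eventually_le <|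
    (eventually_ge_atTop 0).mono fun t ht => (hbounds t ht).2.1
  calc z₀ - ω - δ ≤ z₀ - ω - δ' := by linarith [min_le_left δ ((z₀ - ω) / 2)]
    _ ≤ liminf lam atTop := le_liminf_of_le hbdd.isCoboundedUnder_ge hev

/-- periodic excitation sustains riots.  For the impulsive system with
shocks of amplitude `A` at times `t_i = iT`, for every `T > 0` and `δ > 0` there is
`A* = A*(T,δ,lam₀)` such that for all `A ≥ A*`,
`liminf_{t→∞} λ(t) ≥ λ* - δ` where `λ* = z₀ - ω`. -/
theorem riot_periodic_excitation
    (ω z₀ β a θ p lam₀ : ℝ)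
    (hω : 0 < ω) (hz₀ : 0 < z₀) (hβ : 0 < β) (ha : 0 < a)
    (hθ : 0 < θ) (hp : 0 < p) (hp1 : p ≤ 1)
    (hlow : z₀ * rfun β a 0 < ω) (hhigh : ω < z₀)
    (hlam₀ : 0 < lam₀) :
    ∀ T > (0:ℝ), ∀ δ > (0:ℝ), ∃ Astar > (0:ℝ), ∀ A ≥ Astar,
      ∀ lam alp : ℝ → ℝ,
        lam 0 = lam₀ → alp 0 = A →
        ContinuousOn lam (Set.Ici 0) →
        -- between the shock times the riot dynamics hold
        (∀ i : ℕ, ∀ t ∈ Set.Ioo ((i : ℝ) * T) (((i : ℝ) + 1) * T),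
          HasDerivAt lam (-ω * lam t + rfun β a (alp t) * Gfun z₀ (lam t)) t ∧
          HasDerivAt alp (-(hfun θ p (lam t)) * alp t) t) →
        -- at each shock time the tension is right-continuous and jumps up by `A`
        (∀ i : ℕ, ContinuousWithinAt alp (Set.Ici ((i : ℝ) * T)) ((i : ℝ) * T)) →
        (∀ i : ℕ, 1 ≤ i →
          Tendsto alp (nhdsWithin ((i : ℝ) * T) (Set.Iio ((i : ℝ) * T)))
            (nhds (alp ((i : ℝ) * T) - A))) →
        (z₀ - ω) - δ ≤ Filter.liminf lam Filter.atTop :=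
  riot_periodic_excitation_general ω z₀ β a θ p lam₀ hω hz₀ hβ hθ hp hhigh hlam₀
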